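/- With notation as in the previous statement, there exist an A-module section s : A ⊗_{Z[P]} Z[Q] → A sending 1⊗a to its image in A if a ∈ P and to 0 if a ∉ P, and an A-module map ι : A ⊗_{Z[P]} Z[Q ⊕ (Q^gp/P^gp)] → A ⊗_{Z[P]} Z[Q] sending 1⊗(a,b) to 1⊗a if b ≠ 0 and to 0 if b = 0; moreover s ∘ α = id_A and α ∘ s + ι ∘ (β₂ − β₁) = id on A ⊗_{Z[P]} Z[Q]. -/

import Mathlib

/-!
Since `P → Q` is of Kummer type and `P` is saturated, an element of `Q` whose class in
`Q^gp/P^gp` is trivial already lies in `P`: some power of it lies in `P`, and saturation extracts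
the root. So `Q \ P` is stable under translation by `P`, which is what makes `s` (the image in `A`
on `P`, zero off `P`) `ℤ[P]`-linear. The identity is then checked on `x ⊗ a`: for `a ∈ P` the maps
`β₁` and `β₂` agree and `α ∘ s` fixes `x ⊗ a`; for `a ∉ P` the map `s` vanishes and
`ι ∘ (β₂ - β₁)` returns `x ⊗ a`.
-/

open TensorProduct

/-- `ι : P →* G` realizes `G` as the group hull (Grothendieck group) `P^gp` of `P`. -/
def IsGp {P G : Type} [CommMonoid P] [CommGroup G] (ι : P →* G) : Prop :=
  (∀ x : G, ∃ a b : P, x = ι a * (ι b)⁻¹) ∧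
    (∀ a b : P, ι a = ι b ↔ ∃ c : P, a * c = b * c)

/-- `P` is saturated via `ι : P → P^gp`. -/
def IsSaturatedVia {P G : Type} [CommMonoid P] [CommGroup G] (ι : P →* G) : Prop :=
  Function.Injective ι ∧
    ∀ x : G, (∃ n : ℕ, 1 ≤ n ∧ x ^ n ∈ Set.range ι) → x ∈ Set.range ι

/-- `P` is fs: finitely generated and saturated. -/
def IsFsVia {P G : Type} [CommMonoid P] [CommGroup G] (ι : P →* G) : Prop :=
  Monoid.FG P ∧ IsSaturatedVia ι

/-- `h : P → Q` is of Kummer type. -/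
def IsKummer {P Q : Type} [CommMonoid P] [CommMonoid Q] (h : P →* Q) : Prop :=
  Function.Injective h ∧ ∀ a : Q, ∃ n : ℕ, 1 ≤ n ∧ a ^ n ∈ Set.range h

open MonoidAlgebra Function

section Kummer

variable {P Q G G' : Type} [CommMonoid P] [CommMonoid Q] [CommGroup G] [CommGroup G']
  {ιP : P →* G} {ιQ : Q →* G'} {h : P →* Q} {g : G →* G'}

lemma IsGp.injective_of_comp_eq (hgp : IsGp ιP) (hh : Injective h) (hιQ : Injective ιQ)
    (hg : g.comp ιP = ιQ.comp h) : Injective g := by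
  have hgι (p : P) : g (ιP p) = ιQ (h p) := DFunLike.congr_fun hg p
  refine (injective_iff_map_eq_one g).2 fun x hx ↦ ?_
  obtain ⟨a, b, rfl⟩ := hgp.1 x
  rw [map_mul, map_inv, hgι, hgι, mul_inv_eq_one] at hx
  rw [hh (hιQ hx), mul_inv_cancel]

lemma IsKummer.mem_range_of_map_mem_range (hK : IsKummer h) (hgp : IsGp ιP)
    (hsat : IsSaturatedVia ιP) (hιQ : Injective ιQ) (hg : g.comp ιP = ιQ.comp h) {a : Q}
    (ha : ιQ a ∈ g.range) : a ∈ Set.range h := by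
  have hgι (p : P) : g (ιP p) = ιQ (h p) := DFunLike.congr_fun hg p
  have hginj := hgp.injective_of_comp_eq hK.1 hιQ hg
  obtain ⟨x, hx⟩ := ha
  obtain ⟨n, hn, b, hb⟩ := hK.2 a
  have hxn : ιP b = x ^ n := hginj (by rw [map_pow, hx, hgι, hb, map_pow])
  obtain ⟨c, hc⟩ := hsat.2 x ⟨n, hn, b, hxn⟩
  exact ⟨c, hιQ (by rw [← hgι, hc, hx])⟩

lemma IsKummer.mk_eq_one_iff (hK : IsKummer h) (hgp : IsGp ιP)
    (hsat : IsSaturatedVia ιP) (hιQ : Injective ιQ) (hg : g.comp ιP = ιQ.comp h) (a : Q) :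
    (QuotientGroup.mk (ιQ a) : G' ⧸ g.range) = 1 ↔ a ∈ Set.range h := by
  rw [QuotientGroup.eq_one_iff]
  refine ⟨hK.mem_range_of_map_mem_range hgp hsat hιQ hg, ?_⟩
  rintro ⟨p, rfl⟩
  exact ⟨ιP p, DFunLike.congr_fun hg p⟩

end Kummer

section EquivariantLift

lemma constr_basis_single {k Q N : Type*} [CommSemiring k] [AddCommMonoid N] [Module k N]
    (F : Q → N) (a : Q) : (MonoidAlgebra.basis Q k).constr k F (single a 1) = F a :=
  (MonoidAlgebra.basis Q k).constr_basis k F a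

variable {P Q N : Type*} [CommMonoid P] [CommMonoid Q] [AddCommGroup N] [Module ℤ[P] N]
  [Algebra ℤ[P] ℤ[Q]] {h : P → Q}

noncomputable def equivariantLift
    (hPQ : ∀ p, algebraMap ℤ[P] ℤ[Q] (single p 1) = single (h p) 1)
    (F : Q → N) (hF : ∀ p a, F (h p * a) = single p (1 : ℤ) • F a) : ℤ[Q] →ₗ[ℤ[P]] N :=
  equivariantOfLinearOfComm ((MonoidAlgebra.basis Q ℤ).constr ℤ F) fun p ↦ by
    have := (MonoidAlgebra.basis Q ℤ).ext
      (f₁ := (MonoidAlgebra.basis Q ℤ).constr ℤ F ∘ₗ GroupSMul.linearMap ℤ ℤ[Q] p)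
      (f₂ := GroupSMul.linearMap ℤ N p ∘ₗ (MonoidAlgebra.basis Q ℤ).constr ℤ F) fun a ↦ by
        simp [Algebra.smul_def, hPQ, constr_basis_single, hF]
    exact DFunLike.congr_fun this

@[simp]
lemma equivariantLift_single
    (hPQ : ∀ p, algebraMap ℤ[P] ℤ[Q] (single p 1) = single (h p) 1)
    (F : Q → N) (hF : ∀ p a, F (h p * a) = single p (1 : ℤ) • F a) (a : Q) :
    equivariantLift hPQ F hF (single a 1) = F a :=
  constr_basis_single F a

end EquivariantLift

lemma TensorProduct.addMonoidHom_ext_tmul_single {R A Q M : Type*} [CommSemiring R]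
    [AddCommGroup A] [Module R A] [Monoid Q] [Module R ℤ[Q]] [AddCommGroup M]
    {f f' : A ⊗[R] ℤ[Q] →+ M} (H : ∀ x a, f (x ⊗ₜ single a 1) = f' (x ⊗ₜ single a 1)) :
    f = f' := by
  ext y
  induction y using TensorProduct.induction_on with
  | zero => simp only [map_zero]
  | add y z hy hz => rw [map_add, map_add, hy, hz]
  | tmul x n =>
    induction n using MonoidAlgebra.induction_on with
    | of a => exact H x a
    | add n n' hn hn' => rw [tmul_add, map_add, map_add, hn, hn']
    | smul m n hn => rw [tmul_smul, map_zsmul, map_zsmul, hn]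

lemma RingHom.map_tmul_of_map_one_tmul {R A B B' : Type*} [CommSemiring R] [CommSemiring A]
    [Algebra R A] [Semiring B] [Algebra R B] [Semiring B'] [Algebra R B']
    {β : A ⊗[R] B →+* A ⊗[R] B'} (hβA : ∀ x, β (x ⊗ₜ 1) = x ⊗ₜ 1) {b : B} {b' : B'}
    (hβb : β (1 ⊗ₜ b) = 1 ⊗ₜ b') (x : A) : β (x ⊗ₜ b) = x ⊗ₜ b' := by
  have hx : x ⊗ₜ[R] b = (x ⊗ₜ 1) * (1 ⊗ₜ b) := by
    rw [Algebra.TensorProduct.tmul_mul_tmul, mul_one, one_mul]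
  rw [hx, map_mul, hβA, hβb, Algebra.TensorProduct.tmul_mul_tmul, mul_one, one_mul]

lemma extend_mul_left {P Q A : Type*} [Monoid P] [Monoid Q] [MonoidWithZero A] {h : P →* Q}
    (hh : Injective h) (hcancel : ∀ p a, h p * a ∈ Set.range h → a ∈ Set.range h)
    (φ : P →* A) (p : P) (a : Q) : extend h φ 0 (h p * a) = φ p * extend h φ 0 a := by
  by_cases ha : a ∈ Set.range h
  · obtain ⟨b, rfl⟩ := ha
    rw [← map_mul, hh.extend_apply, hh.extend_apply, map_mul]
  · rw [extend_apply' _ _ _ ha, extend_apply' _ _ _ (mt (hcancel p a) ha), Pi.zero_apply,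
      Pi.zero_apply, mul_zero]

lemma mem_range_of_mul_mem_range {P Q C : Type*} [Monoid P] [Monoid Q] [Monoid C] {h : P →* Q}
    {χ : Q →* C} (hχ : ∀ a, χ a = 1 ↔ a ∈ Set.range h) {p : P}
    {a : Q} (ha : h p * a ∈ Set.range h) : a ∈ Set.range h := by
  rw [← hχ] at ha ⊢
  rwa [map_mul, (hχ _).2 ⟨p, rfl⟩, one_mul] at ha

section Splitting

variable {P Q C A : Type*} [CommMonoid P] [CommMonoid Q] [CommMonoid C] [CommRing A]
  [Algebra ℤ[P] A] [Algebra ℤ[P] ℤ[Q]] [Algebra ℤ[P] ℤ[Q × C]] {h : P →* Q} {φ : P →* A}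

lemma tmul_single_eq_mul_tmul_one (hA : ∀ p, algebraMap ℤ[P] A (single p 1) = φ p)
    (hPQ : ∀ p, algebraMap ℤ[P] ℤ[Q] (single p 1) = single (h p) 1) (x : A) (p : P) :
    x ⊗ₜ[ℤ[P]] single (h p) (1 : ℤ) = (φ p * x) ⊗ₜ 1 := by
  rw [← hPQ, ← mul_one (algebraMap _ _ _), ← Algebra.smul_def, tmul_smul, smul_tmul',
    Algebra.smul_def, hA]

noncomputable def sectionMap (hA : ∀ p, algebraMap ℤ[P] A (single p 1) = φ p)
    (hPQ : ∀ p, algebraMap ℤ[P] ℤ[Q] (single p 1) = single (h p) 1) (hh : Injective h)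
    (hcancel : ∀ p a, h p * a ∈ Set.range h → a ∈ Set.range h) :
    A ⊗[ℤ[P]] ℤ[Q] →ₗ[A] A :=
  (equivariantLift hPQ (extend h φ 0) fun p a ↦ by
    rw [extend_mul_left hh hcancel, Algebra.smul_def, hA]).liftBaseChange A

lemma sectionMap_tmul_single (hA : ∀ p, algebraMap ℤ[P] A (single p 1) = φ p)
    (hPQ : ∀ p, algebraMap ℤ[P] ℤ[Q] (single p 1) = single (h p) 1) (hh : Injective h)
    (hcancel : ∀ p a, h p * a ∈ Set.range h → a ∈ Set.range h) (x : A) (a : Q) :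
    sectionMap hA hPQ hh hcancel (x ⊗ₜ single a 1) = x * extend h φ 0 a := by
  simp [sectionMap]

variable [DecidableEq C]

noncomputable def collapseMap (hPQ : ∀ p, algebraMap ℤ[P] ℤ[Q] (single p 1) = single (h p) 1)
    (hPQC : ∀ p, algebraMap ℤ[P] ℤ[Q × C] (single p 1) = single (h p, 1) 1) :
    A ⊗[ℤ[P]] ℤ[Q × C] →ₗ[A] A ⊗[ℤ[P]] ℤ[Q] :=
  (equivariantLift hPQC (fun ac ↦ if ac.2 = 1 then 0 else (1 : A) ⊗ₜ single ac.1 1)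
    fun p ac ↦ by
      simp only [Prod.fst_mul, Prod.snd_mul, one_mul]
      split_ifs
      · rw [smul_zero]
      · rw [← tmul_smul, Algebra.smul_def, hPQ, single_mul_single, one_mul]).liftBaseChange A

lemma collapseMap_tmul_single (hPQ : ∀ p, algebraMap ℤ[P] ℤ[Q] (single p 1) = single (h p) 1)
    (hPQC : ∀ p, algebraMap ℤ[P] ℤ[Q × C] (single p 1) = single (h p, 1) 1) (x : A) (a : Q)
    (c : C) : collapseMap hPQ hPQC (x ⊗ₜ single (a, c) 1) =
      if c = 1 then 0 else x ⊗ₜ single a 1 := by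
  split_ifs <;> simp [collapseMap, *, smul_tmul']

theorem sectionMap_tmul_one_add_collapseMap {χ : Q →* C} (hχ : ∀ a, χ a = 1 ↔ a ∈ Set.range h)
    (hA : ∀ p, algebraMap ℤ[P] A (single p 1) = φ p)
    (hPQ : ∀ p, algebraMap ℤ[P] ℤ[Q] (single p 1) = single (h p) 1) (hh : Injective h)
    (hPQC : ∀ p, algebraMap ℤ[P] ℤ[Q × C] (single p 1) = single (h p, 1) 1)
    {β₁ β₂ : A ⊗[ℤ[P]] ℤ[Q] →+* A ⊗[ℤ[P]] ℤ[Q × C]}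
    (hβ₁A : ∀ x, β₁ (x ⊗ₜ 1) = x ⊗ₜ 1) (hβ₂A : ∀ x, β₂ (x ⊗ₜ 1) = x ⊗ₜ 1)
    (hβ₁ : ∀ a, β₁ (1 ⊗ₜ single a 1) = 1 ⊗ₜ single (a, 1) 1)
    (hβ₂ : ∀ a, β₂ (1 ⊗ₜ single a 1) = 1 ⊗ₜ single (a, χ a) 1) (y : A ⊗[ℤ[P]] ℤ[Q]) :
    sectionMap hA hPQ hh (fun _ _ ↦ mem_range_of_mul_mem_range hχ) y ⊗ₜ 1 +
      collapseMap hPQ hPQC (β₂ y - β₁ y) = y := by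
  set s := sectionMap hA hPQ hh (fun _ _ ↦ mem_range_of_mul_mem_range hχ)
  set ι := collapseMap (A := A) hPQ hPQC
  have key (x : A) (a : Q) : s (x ⊗ₜ single a 1) ⊗ₜ 1 +
      ι (β₂ (x ⊗ₜ single a 1) - β₁ (x ⊗ₜ single a 1)) = x ⊗ₜ single a 1 := by
    rw [β₁.map_tmul_of_map_one_tmul hβ₁A (hβ₁ a), β₂.map_tmul_of_map_one_tmul hβ₂A (hβ₂ a),
      map_sub, collapseMap_tmul_single, collapseMap_tmul_single, if_pos rfl, sub_zero,
      sectionMap_tmul_single]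
    by_cases ha : a ∈ Set.range h
    · obtain ⟨p, rfl⟩ := ha
      rw [if_pos ((hχ _).2 ⟨p, rfl⟩), add_zero, hh.extend_apply,
        tmul_single_eq_mul_tmul_one hA hPQ, mul_comm]
    · rw [if_neg (mt (hχ a).1 ha), extend_apply' _ _ _ ha, Pi.zero_apply, mul_zero, zero_tmul,
        zero_add]
  let E : A ⊗[ℤ[P]] ℤ[Q] →+ A ⊗[ℤ[P]] ℤ[Q] :=
    ((TensorProduct.mk ℤ[P] A ℤ[Q]).flip 1).toAddMonoidHom.comp s.toAddMonoidHom +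
      ι.toAddMonoidHom.comp (β₂.toAddMonoidHom - β₁.toAddMonoidHom)
  exact DFunLike.congr_fun (TensorProduct.addMonoidHom_ext_tmul_single (f := E)
    (f' := AddMonoidHom.id _) key) y

end Splitting

theorem stmt_5_general (P Q G G' : Type) [CommMonoid P] [CommMonoid Q] [CommGroup G] [CommGroup G']
    (ιP : P →* G) (ιQ : Q →* G') (hgpP : IsGp ιP)
    (hP : IsFsVia ιP) (hQ : IsFsVia ιQ)
    (h : P →* Q) (hK : IsKummer h)
    (g : G →* G') (hg : g.comp ιP = ιQ.comp h)
    (A : Type) [CommRing A] (φ : P →* A)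
    [Algebra (MonoidAlgebra ℤ P) A]
    (hA : ∀ p : P, algebraMap (MonoidAlgebra ℤ P) A (MonoidAlgebra.single p 1) = φ p)
    [Algebra (MonoidAlgebra ℤ P) (MonoidAlgebra ℤ Q)]
    (hPQ : ∀ p : P, algebraMap (MonoidAlgebra ℤ P) (MonoidAlgebra ℤ Q)
      (MonoidAlgebra.single p 1) = MonoidAlgebra.single (h p) 1)
    [Algebra (MonoidAlgebra ℤ P) (MonoidAlgebra ℤ (Q × (G' ⧸ g.range)))]
    (hPQC : ∀ p : P, algebraMap (MonoidAlgebra ℤ P) (MonoidAlgebra ℤ (Q × (G' ⧸ g.range)))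
      (MonoidAlgebra.single p 1) = MonoidAlgebra.single (h p, 1) 1)
    (β₁ β₂ : (A ⊗[MonoidAlgebra ℤ P] MonoidAlgebra ℤ Q) →+*
      (A ⊗[MonoidAlgebra ℤ P] MonoidAlgebra ℤ (Q × (G' ⧸ g.range))))
    (hβ : ∀ x : A, β₁ (x ⊗ₜ 1) = x ⊗ₜ 1 ∧ β₂ (x ⊗ₜ 1) = x ⊗ₜ 1)
    (hβ₁ : ∀ a : Q, β₁ (1 ⊗ₜ MonoidAlgebra.single a 1) =
      1 ⊗ₜ MonoidAlgebra.single (a, (1 : G' ⧸ g.range)) 1)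
    (hβ₂ : ∀ a : Q, β₂ (1 ⊗ₜ MonoidAlgebra.single a 1) =
      1 ⊗ₜ MonoidAlgebra.single (a, (QuotientGroup.mk (ιQ a) : G' ⧸ g.range)) 1) :
    ∃ (s : (A ⊗[MonoidAlgebra ℤ P] MonoidAlgebra ℤ Q) →ₗ[A] A)
      (ι : (A ⊗[MonoidAlgebra ℤ P] MonoidAlgebra ℤ (Q × (G' ⧸ g.range))) →ₗ[A]
        (A ⊗[MonoidAlgebra ℤ P] MonoidAlgebra ℤ Q)),
      (∀ p : P, s (1 ⊗ₜ MonoidAlgebra.single (h p) 1) = φ p) ∧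
      (∀ a : Q, a ∉ Set.range h → s (1 ⊗ₜ MonoidAlgebra.single a 1) = 0) ∧
      (∀ (a : Q) (b : G' ⧸ g.range), b ≠ 1 →
        ι (1 ⊗ₜ MonoidAlgebra.single (a, b) 1) = 1 ⊗ₜ MonoidAlgebra.single a 1) ∧
      (∀ a : Q, ι (1 ⊗ₜ MonoidAlgebra.single (a, (1 : G' ⧸ g.range)) 1) = 0) ∧
      (∀ x : A, s (x ⊗ₜ 1) = x) ∧
      (∀ y : A ⊗[MonoidAlgebra ℤ P] MonoidAlgebra ℤ Q,
        (s y) ⊗ₜ (1 : MonoidAlgebra ℤ Q) + ι (β₂ y - β₁ y) = y) := by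
  classical
  set χ := (QuotientGroup.mk' g.range).comp ιQ
  have hχ : ∀ a, χ a = 1 ↔ a ∈ Set.range h := hK.mk_eq_one_iff hgpP hP.2 hQ.2.1 hg
  have hh : Injective h := hK.1
  refine ⟨sectionMap hA hPQ hh (fun _ _ ↦ mem_range_of_mul_mem_range hχ),
    collapseMap hPQ hPQC, fun p ↦ ?_, fun a ha ↦ ?_, fun a b hb ↦ ?_, fun a ↦ ?_, fun x ↦ ?_,
    sectionMap_tmul_one_add_collapseMap hχ hA hPQ hh hPQC (fun x ↦ (hβ x).1) (fun x ↦ (hβ x).2)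
      hβ₁ hβ₂⟩
  · rw [sectionMap_tmul_single, hh.extend_apply, one_mul]
  · rw [sectionMap_tmul_single, extend_apply' _ _ _ ha, Pi.zero_apply, mul_zero]
  · rw [collapseMap_tmul_single, if_neg hb]
  · rw [collapseMap_tmul_single, if_pos rfl]
  · rw [MonoidAlgebra.one_def, ← map_one h, sectionMap_tmul_single, hh.extend_apply, map_one,
      mul_one]

/-- With notation as in the previous statement (`P → Q` Kummer of fs monoids, `A` a commutative
ring with `P → (A, ·)`, `C = Q^gp/P^gp`, `α(x) = x ⊗ 1`, `β₁(1⊗a) = 1⊗(a,1)`,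
`β₂(1⊗a) = 1⊗(a, a mod P^gp)`): there exist an `A`-module map
`s : A ⊗_{Z[P]} Z[Q] → A` sending `1⊗a` to its image in `A` if `a ∈ P` and to `0` if `a ∉ P`,
and an `A`-module map `ι : A ⊗_{Z[P]} Z[Q ⊕ C] → A ⊗_{Z[P]} Z[Q]` sending `1⊗(a,b)` to `1⊗a`
if `b ≠ 0` and to `0` if `b = 0`, such that `s ∘ α = id_A` and
`α ∘ s + ι ∘ (β₂ − β₁) = id` on `A ⊗_{Z[P]} Z[Q]`. -/
theorem stmt_5 (P Q G G' : Type) [CommMonoid P] [CommMonoid Q] [CommGroup G] [CommGroup G']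
    (ιP : P →* G) (ιQ : Q →* G') (hgpP : IsGp ιP) (hgpQ : IsGp ιQ)
    (hP : IsFsVia ιP) (hQ : IsFsVia ιQ)
    (h : P →* Q) (hK : IsKummer h)
    (g : G →* G') (hg : g.comp ιP = ιQ.comp h)
    (A : Type) [CommRing A] (φ : P →* A)
    [Algebra (MonoidAlgebra ℤ P) A]
    (hA : ∀ p : P, algebraMap (MonoidAlgebra ℤ P) A (MonoidAlgebra.single p 1) = φ p)
    [Algebra (MonoidAlgebra ℤ P) (MonoidAlgebra ℤ Q)]
    (hPQ : ∀ p : P, algebraMap (MonoidAlgebra ℤ P) (MonoidAlgebra ℤ Q)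
      (MonoidAlgebra.single p 1) = MonoidAlgebra.single (h p) 1)
    [Algebra (MonoidAlgebra ℤ P) (MonoidAlgebra ℤ (Q × (G' ⧸ g.range)))]
    (hPQC : ∀ p : P, algebraMap (MonoidAlgebra ℤ P) (MonoidAlgebra ℤ (Q × (G' ⧸ g.range)))
      (MonoidAlgebra.single p 1) = MonoidAlgebra.single (h p, 1) 1)
    (β₁ β₂ : (A ⊗[MonoidAlgebra ℤ P] MonoidAlgebra ℤ Q) →+*
      (A ⊗[MonoidAlgebra ℤ P] MonoidAlgebra ℤ (Q × (G' ⧸ g.range))))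
    (hβ : ∀ x : A, β₁ (x ⊗ₜ 1) = x ⊗ₜ 1 ∧ β₂ (x ⊗ₜ 1) = x ⊗ₜ 1)
    (hβ₁ : ∀ a : Q, β₁ (1 ⊗ₜ MonoidAlgebra.single a 1) =
      1 ⊗ₜ MonoidAlgebra.single (a, (1 : G' ⧸ g.range)) 1)
    (hβ₂ : ∀ a : Q, β₂ (1 ⊗ₜ MonoidAlgebra.single a 1) =
      1 ⊗ₜ MonoidAlgebra.single (a, (QuotientGroup.mk (ιQ a) : G' ⧸ g.range)) 1) :
    ∃ (s : (A ⊗[MonoidAlgebra ℤ P] MonoidAlgebra ℤ Q) →ₗ[A] A)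
      (ι : (A ⊗[MonoidAlgebra ℤ P] MonoidAlgebra ℤ (Q × (G' ⧸ g.range))) →ₗ[A]
        (A ⊗[MonoidAlgebra ℤ P] MonoidAlgebra ℤ Q)),
      (∀ p : P, s (1 ⊗ₜ MonoidAlgebra.single (h p) 1) = φ p) ∧
      (∀ a : Q, a ∉ Set.range h → s (1 ⊗ₜ MonoidAlgebra.single a 1) = 0) ∧
      (∀ (a : Q) (b : G' ⧸ g.range), b ≠ 1 →
        ι (1 ⊗ₜ MonoidAlgebra.single (a, b) 1) = 1 ⊗ₜ MonoidAlgebra.single a 1) ∧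
      (∀ a : Q, ι (1 ⊗ₜ MonoidAlgebra.single (a, (1 : G' ⧸ g.range)) 1) = 0) ∧
      (∀ x : A, s (x ⊗ₜ 1) = x) ∧
      (∀ y : A ⊗[MonoidAlgebra ℤ P] MonoidAlgebra ℤ Q,
        (s y) ⊗ₜ (1 : MonoidAlgebra ℤ Q) + ι (β₂ y - β₁ y) = y) :=
  stmt_5_general P Q G G' ιP ιQ hgpP hP hQ h hK g hg A φ hA hPQ hPQC β₁ β₂ hβ hβ₁ hβ₂
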